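/- arXiv:0902.2104 — 3 statements merged into one kernel-verified Lean document; each statement's English description precedes it below -/
import Mathlib

section
/- Let θ be a formula such that there exists a synchronous TEHS in which θ is satisfiable. Then θ is satisfiable in a synchronous pseudo-TEM. -/
/-!
Replace each `R^D_A` of the Hintikka structure by the equivalence closure `R'^D_A` of
`⋃_{B ⊇ A} R^D_B`, and label atoms by `H ∩ AP`. The new relations are equivalences and
antitone in the coalition by construction, and every generating step keeps the time
component, so synchrony survives. By (H6) each `D_{A'}`-formula with `A' ⊆ A` is constant
along `R'^D_A`, which is what makes the truth lemma `φ ∈ H x → x ⊨ φ` go through by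
induction on `φ`, simultaneously with `¬φ ∈ H x → x ⊭ φ`.
-/

namespace CMATEL

/-- A coalition is a nonempty set of agents. -/
def Coalition (Agt : Type) : Type := {A : Set Agt // A.Nonempty}

/-- The singleton coalition `{a}`. -/
def single {Agt : Type} (a : Agt) : Coalition Agt := ⟨{a}, Set.singleton_nonempty a⟩

/-- Formulas of the language L. -/
inductive Formula (Agt AP : Type) : Type where
  | atom : AP → Formula Agt AP
  | neg  : Formula Agt AP → Formula Agt AP
  | and  : Formula Agt AP → Formula Agt AP → Formula Agt AP
  | next : Formula Agt AP → Formula Agt AP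
  | untl : Formula Agt AP → Formula Agt AP → Formula Agt AP
  | dk   : Coalition Agt → Formula Agt AP → Formula Agt AP
  | ck   : Coalition Agt → Formula Agt AP → Formula Agt AP

variable {Agt AP : Type}

def Formula.imp (φ ψ : Formula Agt AP) : Formula Agt AP :=
  Formula.neg (Formula.and φ (Formula.neg ψ))
def Formula.or (φ ψ : Formula Agt AP) : Formula Agt AP :=
  Formula.neg (Formula.and (Formula.neg φ) (Formula.neg ψ))
def Formula.iff (φ ψ : Formula Agt AP) : Formula Agt AP :=
  Formula.and (φ.imp ψ) (ψ.imp φ)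

/-- The set of subformulas of a formula. -/
def Formula.subf : Formula Agt AP → Set (Formula Agt AP)
  | .atom p   => {Formula.atom p}
  | .neg φ    => insert (Formula.neg φ) φ.subf
  | .and φ ψ  => insert (Formula.and φ ψ) (φ.subf ∪ ψ.subf)
  | .next φ   => insert (Formula.next φ) φ.subf
  | .untl φ ψ => insert (Formula.untl φ ψ) (φ.subf ∪ ψ.subf)
  | .dk A φ   => insert (Formula.dk A φ) φ.subf
  | .ck A φ   => insert (Formula.ck A φ) φ.subf

/-- A temporal-epistemic system (TES): a nonempty set of states, a nonempty set
of runs, and, for every coalition `A`, relations `R^D_A` and `R^C_A` on points,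
where `R^C_A` is the reflexive transitive closure of the union of `R^D_{A'}`
over coalitions `A' ⊆ A`. -/
structure TES (Agt : Type) where
  State : Type
  stateNE : Nonempty State
  runs : Set (ℕ → State)
  runsNE : runs.Nonempty
  RD : Coalition Agt → ↥runs × ℕ → ↥runs × ℕ → Prop
  RC : Coalition Agt → ↥runs × ℕ → ↥runs × ℕ → Prop
  hRC : ∀ A : Coalition Agt, RC A =
    Relation.ReflTransGen (fun x y => ∃ A' : Coalition Agt, A'.1 ⊆ A.1 ∧ RD A' x y)

abbrev TES.Point (G : TES Agt) : Type := ↥G.runs × ℕ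

/-- Synchrony: epistemically related points have the same time component. -/
def TES.Synchronous (G : TES Agt) : Prop :=
  ∀ (A : Coalition Agt) (x y : G.Point), G.RD A x y → x.2 = y.2

/-- A TEF: each `R^D_A` is an equivalence, and `R^D_A = ⋂_{a ∈ A} R^D_{{a}}`. -/
def IsTEF (G : TES Agt) : Prop :=
  (∀ A : Coalition Agt, Equivalence (G.RD A)) ∧
  (∀ (A : Coalition Agt) (x y : G.Point), G.RD A x y ↔ ∀ a ∈ A.1, G.RD (single a) x y)

/-- A pseudo-TEF: each `R^D_A` is an equivalence, and `R^D_A ⊆ R^D_B` for `B ⊆ A`. -/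
def IsPseudoTEF (G : TES Agt) : Prop :=
  (∀ A : Coalition Agt, Equivalence (G.RD A)) ∧
  (∀ (A B : Coalition Agt), B.1 ⊆ A.1 → ∀ x y : G.Point, G.RD A x y → G.RD B x y)

/-- Satisfaction at points `R × ℕ`, given the epistemic relations and a labeling. -/
def Sat {R : Type} (RD RC : Coalition Agt → R × ℕ → R × ℕ → Prop)
    (lab : R × ℕ → Set AP) : R × ℕ → Formula Agt AP → Prop
  | x, .atom p => p ∈ lab x
  | x, .neg φ => ¬ Sat RD RC lab x φ
  | x, .and φ ψ => Sat RD RC lab x φ ∧ Sat RD RC lab x ψ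
  | x, .next φ => Sat RD RC lab (x.1, x.2 + 1) φ
  | x, .untl φ ψ => ∃ i, x.2 ≤ i ∧ Sat RD RC lab (x.1, i) ψ ∧
      ∀ j, x.2 ≤ j → j < i → Sat RD RC lab (x.1, j) φ
  | x, .dk A φ => ∀ y, RD A x y → Sat RD RC lab y φ
  | x, .ck A φ => ∀ y, RC A x y → Sat RD RC lab y φ

/-- A temporal-epistemic model: a TEF together with a labeling of points. -/
structure TEM (Agt AP : Type) where
  G : TES Agt
  lab : G.Point → Set AP
  isTEF : IsTEF G

def TEM.sat (M : TEM Agt AP) : M.G.Point → Formula Agt AP → Prop :=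
  Sat M.G.RD M.G.RC M.lab

/-- A pseudo temporal-epistemic model: a pseudo-TEF together with a labeling. -/
structure PseudoTEM (Agt AP : Type) where
  G : TES Agt
  lab : G.Point → Set AP
  isPTEF : IsPseudoTEF G

def PseudoTEM.sat (M : PseudoTEM Agt AP) : M.G.Point → Formula Agt AP → Prop :=
  Sat M.G.RD M.G.RC M.lab

/-- `A`-reachability: the reflexive transitive closure of single-agent steps
`R^D_{{a}}`, `a ∈ A`. -/
def AReach (G : TES Agt) (A : Coalition Agt) : G.Point → G.Point → Prop :=
  Relation.ReflTransGen (fun x y => ∃ a ∈ A.1, G.RD (single a) x y)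

/-- Fully expanded sets of formulas. -/
def FullyExpanded (Δ : Set (Formula Agt AP)) : Prop :=
  (∀ φ : Formula Agt AP, Formula.neg (Formula.neg φ) ∈ Δ → φ ∈ Δ) ∧
  (∀ φ ψ : Formula Agt AP, Formula.and φ ψ ∈ Δ → φ ∈ Δ ∧ ψ ∈ Δ) ∧
  (∀ φ ψ : Formula Agt AP, Formula.neg (Formula.and φ ψ) ∈ Δ →
      Formula.neg φ ∈ Δ ∨ Formula.neg ψ ∈ Δ) ∧
  (∀ φ : Formula Agt AP, Formula.neg (Formula.next φ) ∈ Δ →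
      Formula.next (Formula.neg φ) ∈ Δ) ∧
  (∀ φ ψ : Formula Agt AP, Formula.untl φ ψ ∈ Δ →
      ψ ∈ Δ ∨ (φ ∈ Δ ∧ Formula.next (Formula.untl φ ψ) ∈ Δ)) ∧
  (∀ φ ψ : Formula Agt AP, Formula.neg (Formula.untl φ ψ) ∈ Δ →
      (Formula.neg ψ ∈ Δ ∧ Formula.neg φ ∈ Δ) ∨
      (Formula.neg ψ ∈ Δ ∧ Formula.neg (Formula.next (Formula.untl φ ψ)) ∈ Δ)) ∧
  (∀ (A A' : Coalition Agt) (φ : Formula Agt AP), Formula.dk A φ ∈ Δ →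
      A.1 ⊆ A'.1 → Formula.dk A' φ ∈ Δ) ∧
  (∀ (A : Coalition Agt) (φ : Formula Agt AP), Formula.dk A φ ∈ Δ → φ ∈ Δ) ∧
  (∀ (A : Coalition Agt) (φ : Formula Agt AP), Formula.ck A φ ∈ Δ →
      ∀ a ∈ A.1, Formula.dk (single a) (Formula.and φ (Formula.ck A φ)) ∈ Δ) ∧
  (∀ (A : Coalition Agt) (φ : Formula Agt AP), Formula.neg (Formula.ck A φ) ∈ Δ →
      ∃ a ∈ A.1, Formula.neg (Formula.dk (single a) (Formula.and φ (Formula.ck A φ))) ∈ Δ) ∧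
  (∀ ψ ∈ Δ, ∀ (A : Coalition Agt) (φ : Formula Agt AP),
      Formula.dk A φ ∈ ψ.subf → Formula.dk A φ ∈ Δ ∨ Formula.neg (Formula.dk A φ) ∈ Δ)

/-- Hintikka-structure conditions (H1)–(H7) for a labeling `H` on a TES. -/
def IsHintikka (G : TES Agt) (H : G.Point → Set (Formula Agt AP)) : Prop :=
  (∀ (x : G.Point) (φ : Formula Agt AP), Formula.neg φ ∈ H x → φ ∉ H x) ∧
  (∀ x : G.Point, FullyExpanded (H x)) ∧
  (∀ (r : ↥G.runs) (n : ℕ) (φ : Formula Agt AP),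
      Formula.next φ ∈ H (r, n) → φ ∈ H (r, n + 1)) ∧
  (∀ (r : ↥G.runs) (n : ℕ) (φ ψ : Formula Agt AP), Formula.untl φ ψ ∈ H (r, n) →
      ∃ i, n ≤ i ∧ ψ ∈ H (r, i) ∧ ∀ j, n ≤ j → j < i → φ ∈ H (r, j)) ∧
  (∀ (x : G.Point) (A : Coalition Agt) (φ : Formula Agt AP),
      Formula.neg (Formula.dk A φ) ∈ H x →
      ∃ y : G.Point, G.RD A x y ∧ Formula.neg φ ∈ H y) ∧
  (∀ (x y : G.Point) (A : Coalition Agt), G.RD A x y →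
      ∀ (A' : Coalition Agt), A'.1 ⊆ A.1 → ∀ φ : Formula Agt AP,
        (Formula.dk A' φ ∈ H x ↔ Formula.dk A' φ ∈ H y)) ∧
  (∀ (x : G.Point) (A : Coalition Agt) (φ : Formula Agt AP),
      Formula.neg (Formula.ck A φ) ∈ H x →
      ∃ y : G.Point, G.RC A x y ∧ Formula.neg φ ∈ H y)

/-- A temporal-epistemic Hintikka structure. -/
structure TEHS (Agt AP : Type) where
  G : TES Agt
  H : G.Point → Set (Formula Agt AP)
  isH : IsHintikka G H

def TEHS.Synchronous (Hs : TEHS Agt AP) : Prop := Hs.G.Synchronous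

/-- Derived relation `R'^D_A`: the reflexive, symmetric and transitive closure of
the union of `R^D_B` over coalitions `B ⊇ A`. -/
def derivedRD (G : TES Agt) (A : Coalition Agt) : G.Point → G.Point → Prop :=
  Relation.EqvGen (fun x y => ∃ B : Coalition Agt, A.1 ⊆ B.1 ∧ G.RD B x y)

/-- Derived relation `R'^C_A`: the transitive closure of the union of
`R'^D_{{a}}` over `a ∈ A`. -/
def derivedRC (G : TES Agt) (A : Coalition Agt) : G.Point → G.Point → Prop :=
  Relation.TransGen (fun x y => ∃ a ∈ A.1, derivedRD G (single a) x y)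

/-- Derived labeling `L(r,n) = H(r,n) ∩ AP`. -/
def derivedLab (Hs : TEHS Agt AP) : Hs.G.Point → Set AP :=
  fun x => {p | Formula.atom p ∈ Hs.H x}

/-- Patently inconsistent set: contains a formula together with its negation. -/
def PatentlyInconsistent (Δ : Set (Formula Agt AP)) : Prop :=
  ∃ φ : Formula Agt AP, φ ∈ Δ ∧ Formula.neg φ ∈ Δ

/-- Minimal fully expanded extension. -/
def MinimalFEE (Γ Δ : Set (Formula Agt AP)) : Prop :=
  FullyExpanded Δ ∧ Γ ⊆ Δ ∧
  ¬ ∃ Δ' : Set (Formula Agt AP), FullyExpanded Δ' ∧ Γ ⊆ Δ' ∧ Δ' ⊂ Δ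

/-- A maximal path from `x` to `y`: consecutive points are related by `R^D_{A_i}`
and by no `R^D_B` for a strictly larger coalition `B`. -/
def IsMaximalPath (G : TES Agt) (m : ℕ) (pts : ℕ → G.Point) (cs : ℕ → Coalition Agt)
    (x y : G.Point) : Prop :=
  pts 0 = x ∧ pts m = y ∧ ∀ i < m,
    G.RD (cs i) (pts i) (pts (i + 1)) ∧
    ∀ B : Coalition Agt, (cs i).1 ⊂ B.1 → ¬ G.RD B (pts i) (pts (i + 1))

/-- A maximal path equals its reduction iff no two consecutive points lie on the
same run and no two consecutive coalition labels coincide. -/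
def IsReducedPath (G : TES Agt) (m : ℕ) (pts : ℕ → G.Point) (cs : ℕ → Coalition Agt) : Prop :=
  (∀ i < m, (pts i).1 ≠ (pts (i + 1)).1) ∧ (∀ i, i + 1 < m → cs i ≠ cs (i + 1))

/-- Forest-likeness: between any two points there is at most one reduced maximal path. -/
def ForestLike (G : TES Agt) : Prop :=
  ∀ (x y : G.Point) (m₁ : ℕ) (pts₁ : ℕ → G.Point) (cs₁ : ℕ → Coalition Agt)
    (m₂ : ℕ) (pts₂ : ℕ → G.Point) (cs₂ : ℕ → Coalition Agt),
    IsMaximalPath G m₁ pts₁ cs₁ x y → IsReducedPath G m₁ pts₁ cs₁ →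
    IsMaximalPath G m₂ pts₂ cs₂ x y → IsReducedPath G m₂ pts₂ cs₂ →
    m₁ = m₂ ∧ (∀ i ≤ m₁, pts₁ i = pts₂ i) ∧ (∀ i < m₁, cs₁ i = cs₂ i)

/-- Finite conjunction of a nonempty list of formulas. -/
def bigAnd : Formula Agt AP → List (Formula Agt AP) → Formula Agt AP
  | φ, [] => φ
  | φ, ψ :: l => Formula.and φ (bigAnd ψ l)

/-- `D_{{a}}(φ ∧ C_A φ)`. -/
def dform (A : Coalition Agt) (φ : Formula Agt AP) (a : Agt) : Formula Agt AP :=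
  Formula.dk (single a) (Formula.and φ (Formula.ck A φ))

theorem _root_.Relation.EqvGen.apply_eq_of_rel {α β : Type*} {r : α → α → Prop} {f : α → β}
    (hr : ∀ x y, r x y → f x = f y) {x y : α} (h : Relation.EqvGen r x y) : f x = f y :=
  Setoid.eqvGen_le (s := Setoid.ker f) hr h

section Derived

variable (G : TES Agt)

lemma derivedRD_of_RD {A : Coalition Agt} {x y : G.Point} (h : G.RD A x y) :
    derivedRD G A x y :=
  .rel _ _ ⟨A, subset_rfl, h⟩

lemma derivedRD_anti {A B : Coalition Agt} (hBA : B.1 ⊆ A.1) {x y : G.Point}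
    (h : derivedRD G A x y) : derivedRD G B x y :=
  Relation.EqvGen.mono (fun _ _ ⟨C, hAC, hC⟩ => ⟨C, hBA.trans hAC, hC⟩) _ _ h

def derivedTES : TES Agt where
  State := G.State
  stateNE := G.stateNE
  runs := G.runs
  runsNE := G.runsNE
  RD := derivedRD G
  RC A := Relation.ReflTransGen fun x y => ∃ A' : Coalition Agt, A'.1 ⊆ A.1 ∧ derivedRD G A' x y
  hRC _ := rfl

lemma isPseudoTEF_derivedTES : IsPseudoTEF (derivedTES G) :=
  ⟨fun _ => Relation.EqvGen.is_equivalence _, fun _ _ hBA _ _ => derivedRD_anti G hBA⟩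

lemma derivedTES_RC_of_RC {A : Coalition Agt} {x y : G.Point} (h : G.RC A x y) :
    (derivedTES G).RC A x y := by
  rw [G.hRC A] at h
  exact Relation.ReflTransGen.mono (fun _ _ ⟨A', hA', hr⟩ => ⟨A', hA', derivedRD_of_RD G hr⟩) _ _ h

end Derived

lemma TES.Synchronous.derivedTES {G : TES Agt} (hG : G.Synchronous) :
    (derivedTES G).Synchronous :=
  fun _ _ _ h => h.apply_eq_of_rel (f := Prod.snd) fun _ _ ⟨B, _, hB⟩ => hG B _ _ hB

section FullyExpanded

variable {Δ : Set (Formula Agt AP)}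

lemma FullyExpanded.mem_and_mem_of_dk_and (hΔ : FullyExpanded Δ) {B : Coalition Agt}
    {φ ψ : Formula Agt AP} (h : .dk B (.and φ ψ) ∈ Δ) : φ ∈ Δ ∧ ψ ∈ Δ :=
  hΔ.2.1 φ ψ (hΔ.2.2.2.2.2.2.2.1 B _ h)

lemma FullyExpanded.mem_of_ck_mem (hΔ : FullyExpanded Δ) {A : Coalition Agt}
    {φ : Formula Agt AP} (h : .ck A φ ∈ Δ) : φ ∈ Δ :=
  let ⟨a, ha⟩ := A.2
  (hΔ.mem_and_mem_of_dk_and (hΔ.2.2.2.2.2.2.2.2.1 A φ h a ha)).1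

end FullyExpanded

namespace TEHS

variable (Hs : TEHS Agt AP)

def derivedModel : PseudoTEM Agt AP :=
  ⟨derivedTES Hs.G, derivedLab Hs, isPseudoTEF_derivedTES Hs.G⟩

variable {Hs}

lemma dk_mem_iff_of_derivedRD {A A' : Coalition Agt} (hA' : A'.1 ⊆ A.1) (χ : Formula Agt AP)
    {x y : Hs.G.Point} (h : derivedRD Hs.G A x y) :
    Formula.dk A' χ ∈ Hs.H x ↔ Formula.dk A' χ ∈ Hs.H y :=
  Iff.of_eq <| h.apply_eq_of_rel fun _ _ ⟨_, hAB, hB⟩ =>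
    propext (Hs.isH.2.2.2.2.2.1 _ _ _ hB A' (hA'.trans hAB) χ)

/-- Each step `R'^D_{A'}` with `a ∈ A' ⊆ A` carries `D_{{a}}(χ ∧ C_A χ)` along, by (H6). -/
lemma ck_mem_of_derivedTES_RC {A : Coalition Agt} {χ : Formula Agt AP} {x y : Hs.G.Point}
    (hx : Formula.ck A χ ∈ Hs.H x) (h : (derivedTES Hs.G).RC A x y) :
    Formula.ck A χ ∈ Hs.H y := by
  induction h with
  | refl => exact hx
  | tail _ hstep ih =>
    obtain ⟨A', hA'A, hd⟩ := hstep
    obtain ⟨a, ha⟩ := A'.2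
    have hdk := (Hs.isH.2.1 _).2.2.2.2.2.2.2.2.1 A χ ih a (hA'A ha)
    rw [dk_mem_iff_of_derivedRD (Set.singleton_subset_iff.mpr ha) _ hd] at hdk
    exact ((Hs.isH.2.1 _).mem_and_mem_of_dk_and hdk).2

lemma neg_untl_mem_or_neg_mem {χ ψ : Formula Agt AP} {r : ↥Hs.G.runs} {n : ℕ}
    (hn : Formula.neg (Formula.untl χ ψ) ∈ Hs.H (r, n)) :
    ∀ i, n ≤ i → Formula.neg (Formula.untl χ ψ) ∈ Hs.H (r, i) ∨
      ∃ j, n ≤ j ∧ j < i ∧ Formula.neg χ ∈ Hs.H (r, j) := by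
  intro i hi
  induction i, hi using Nat.le_induction with
  | base => exact .inl hn
  | succ i hi ih =>
    rcases ih with hi' | ⟨j, hnj, hji, hj⟩
    · rcases (Hs.isH.2.1 _).2.2.2.2.2.1 χ ψ hi' with ⟨-, hχ⟩ | ⟨-, hX⟩
      · exact .inr ⟨i, hi, i.lt_succ_self, hχ⟩
      · exact .inl (Hs.isH.2.2.1 r i _ ((Hs.isH.2.1 _).2.2.2.1 _ hX))
    · exact .inr ⟨j, hnj, hji.trans i.lt_succ_self, hj⟩

lemma neg_mem_of_neg_untl_mem {χ ψ : Formula Agt AP} {x : Hs.G.Point}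
    (hx : Formula.neg (Formula.untl χ ψ) ∈ Hs.H x) : Formula.neg ψ ∈ Hs.H x := by
  rcases (Hs.isH.2.1 x).2.2.2.2.2.1 χ ψ hx with ⟨h, -⟩ | ⟨h, -⟩ <;> exact h

theorem sat_derivedModel (φ : Formula Agt AP) :
    (∀ x : Hs.G.Point, φ ∈ Hs.H x → Hs.derivedModel.sat x φ) ∧
    (∀ x : Hs.G.Point, Formula.neg φ ∈ Hs.H x → ¬ Hs.derivedModel.sat x φ) := by
  obtain ⟨hcons, hfe, hnext, huntl, hdk, -, hck⟩ := Hs.isH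
  induction φ with
  | atom p => exact ⟨fun _ hx => hx, fun x hx hs => hcons x _ hx hs⟩
  | neg χ ih => exact ⟨fun x hx => ih.2 x hx, fun x hx hs => hs (ih.1 x ((hfe x).1 χ hx))⟩
  | and χ ψ ihχ ihψ =>
    refine ⟨fun x hx => ?_, fun x hx hs => ?_⟩
    · obtain ⟨hχ, hψ⟩ := (hfe x).2.1 χ ψ hx
      exact ⟨ihχ.1 x hχ, ihψ.1 x hψ⟩
    · rcases (hfe x).2.2.1 χ ψ hx with hχ | hψ
      exacts [ihχ.2 x hχ hs.1, ihψ.2 x hψ hs.2]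
  | next χ ih =>
    exact ⟨fun x hx => ih.1 _ (hnext x.1 x.2 χ hx),
      fun x hx => ih.2 _ (hnext x.1 x.2 _ ((hfe x).2.2.2.1 χ hx))⟩
  | untl χ ψ ihχ ihψ =>
    refine ⟨fun x hx => ?_, fun x hx hs => ?_⟩
    · obtain ⟨i, hni, hψ, hχ⟩ := huntl x.1 x.2 χ ψ hx
      exact ⟨i, hni, ihψ.1 _ hψ, fun j hj hji => ihχ.1 _ (hχ j hj hji)⟩
    · obtain ⟨i, hni, hsψ, hsχ⟩ := hs
      rcases neg_untl_mem_or_neg_mem hx i hni with hi | ⟨j, hnj, hji, hj⟩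
      exacts [ihψ.2 _ (neg_mem_of_neg_untl_mem hi) hsψ, ihχ.2 _ hj (hsχ j hnj hji)]
  | dk A χ ih =>
    refine ⟨fun x hx y hxy => ?_, fun x hx hs => ?_⟩
    · have hy := (dk_mem_iff_of_derivedRD subset_rfl χ hxy).mp hx
      exact ih.1 y ((hfe y).2.2.2.2.2.2.2.1 A χ hy)
    · obtain ⟨y, hxy, hy⟩ := hdk x A χ hx
      exact ih.2 y hy (hs y (derivedRD_of_RD Hs.G hxy))
  | ck A χ ih =>
    refine ⟨fun x hx y hxy => ?_, fun x hx hs => ?_⟩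
    · exact ih.1 y ((hfe y).mem_of_ck_mem (ck_mem_of_derivedTES_RC hx hxy))
    · obtain ⟨y, hxy, hy⟩ := hck x A χ hx
      exact ih.2 y hy (hs y (derivedTES_RC_of_RC Hs.G hxy))

end TEHS

theorem statement_5_general {Agt AP : Type}
    (θ : Formula Agt AP)
    (h : ∃ (Hs : TEHS Agt AP), Hs.G.Synchronous ∧ ∃ x : Hs.G.Point, θ ∈ Hs.H x) :
    ∃ (M : PseudoTEM Agt AP), M.G.Synchronous ∧ ∃ x : M.G.Point, M.sat x θ := by
  obtain ⟨Hs, hsync, x, hx⟩ := h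
  exact ⟨Hs.derivedModel, hsync.derivedTES, x, (TEHS.sat_derivedModel θ).1 x hx⟩

/-- If `θ` is satisfiable in some synchronous TEHS, then `θ` is
satisfiable in a synchronous pseudo-TEM. -/
theorem statement_5 {Agt AP : Type} [Fintype Agt] [Nonempty Agt]
    (θ : Formula Agt AP)
    (h : ∃ (Hs : TEHS Agt AP), Hs.G.Synchronous ∧ ∃ x : Hs.G.Point, θ ∈ Hs.H x) :
    ∃ (M : PseudoTEM Agt AP), M.G.Synchronous ∧ ∃ x : M.G.Point, M.sat x θ :=
  statement_5_general θ h

end CMATEL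
end

section
/- Let H be the labeling of a TEHS, let A be a coalition and suppose C_A φ ∈ H(r,n). Suppose there is a finite sequence of points (r,n) = (r_0,n_0), ..., (r_m,n_m) = (r',n') such that for every i < m there exist an agent a_i ∈ A and a coalition B_i with a_i ∈ B_i such that either ((r_i,n_i),(r_{i+1},n_{i+1})) ∈ R^D_{B_i} or ((r_{i+1},n_{i+1}),(r_i,n_i)) ∈ R^D_{B_i}. Then C_A φ ∈ H(r',n') and φ ∈ H(r',n'). -/
/-!
If `C_A φ` labels a point then, by full expansion, so does `D_{a}(φ ∧ C_A φ)` for every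
`a ∈ A`. Condition (H6) makes a `D_{a}`-formula shared by the two ends of any
`R^D_B`-step with `a ∈ B`, whichever way the step points, so `C_A φ` travels along the
path, and unfolding it once more at the endpoint yields `φ`.
-/

namespace CMATEL

variable {Agt AP : Type}

namespace FullyExpanded

variable {Δ : Set (Formula Agt AP)} (hΔ : FullyExpanded Δ)
include hΔ

theorem dform_mem_of_ck_mem {A : Coalition Agt} {φ : Formula Agt AP} {a : Agt}
    (h : Formula.ck A φ ∈ Δ) (ha : a ∈ A.1) : dform A φ a ∈ Δ :=
  hΔ.2.2.2.2.2.2.2.2.1 A φ h a ha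

theorem and_mem_of_dk_mem {B : Coalition Agt} {φ ψ : Formula Agt AP}
    (h : Formula.dk B (Formula.and φ ψ) ∈ Δ) : φ ∈ Δ ∧ ψ ∈ Δ :=
  hΔ.2.1 φ ψ (hΔ.2.2.2.2.2.2.2.1 B _ h)

theorem mem_of_ck_mem_s8 {A : Coalition Agt} {φ : Formula Agt AP}
    (h : Formula.ck A φ ∈ Δ) : φ ∈ Δ :=
  (hΔ.and_mem_of_dk_mem (hΔ.dform_mem_of_ck_mem h A.2.some_mem)).1

end FullyExpanded

namespace IsHintikka

variable {G : TES Agt} {H : G.Point → Set (Formula Agt AP)} (hH : IsHintikka G H)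
include hH

theorem fullyExpanded (x : G.Point) : FullyExpanded (H x) :=
  hH.2.1 x

theorem dk_single_mem_iff_of_rd {B : Coalition Agt} {a : Agt} (haB : a ∈ B.1)
    {x y : G.Point} (hxy : G.RD B x y) (ψ : Formula Agt AP) :
    Formula.dk (single a) ψ ∈ H x ↔ Formula.dk (single a) ψ ∈ H y :=
  hH.2.2.2.2.2.1 x y B hxy (single a) (Set.singleton_subset_iff.mpr haB) ψ

theorem ck_mem_of_rd {A B : Coalition Agt} {φ : Formula Agt AP} {a : Agt}
    (haA : a ∈ A.1) (haB : a ∈ B.1) {x y : G.Point} (hx : Formula.ck A φ ∈ H x)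
    (hxy : G.RD B x y ∨ G.RD B y x) : Formula.ck A φ ∈ H y := by
  have hdx : dform A φ a ∈ H x := (hH.fullyExpanded x).dform_mem_of_ck_mem hx haA
  have hdy : dform A φ a ∈ H y := by
    rcases hxy with hxy | hyx
    · exact (hH.dk_single_mem_iff_of_rd haB hxy _).mp hdx
    · exact (hH.dk_single_mem_iff_of_rd haB hyx _).mpr hdx
  exact ((hH.fullyExpanded y).and_mem_of_dk_mem hdy).2

theorem ck_mem_of_path {A : Coalition Agt} {φ : Formula Agt AP} {m : ℕ}
    {pts : ℕ → G.Point} (h0 : Formula.ck A φ ∈ H (pts 0))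
    (hstep : ∀ i < m, ∃ a ∈ A.1, ∃ B : Coalition Agt, a ∈ B.1 ∧
        (G.RD B (pts i) (pts (i + 1)) ∨ G.RD B (pts (i + 1)) (pts i))) :
    Formula.ck A φ ∈ H (pts m) := by
  induction m with
  | zero => exact h0
  | succ m ih =>
    obtain ⟨a, haA, B, haB, hrel⟩ := hstep m m.lt_succ_self
    exact hH.ck_mem_of_rd haA haB (ih fun i hi => hstep i (hi.trans m.lt_succ_self)) hrel

end IsHintikka

theorem statement_8_general {Agt AP : Type}
    (Hs : TEHS Agt AP) (A : Coalition Agt) (φ : Formula Agt AP)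
    (x y : Hs.G.Point) (hx : Formula.ck A φ ∈ Hs.H x)
    (m : ℕ) (pts : ℕ → Hs.G.Point) (h0 : pts 0 = x) (hm : pts m = y)
    (hstep : ∀ i < m, ∃ a ∈ A.1, ∃ B : Coalition Agt, a ∈ B.1 ∧
        (Hs.G.RD B (pts i) (pts (i + 1)) ∨ Hs.G.RD B (pts (i + 1)) (pts i))) :
    Formula.ck A φ ∈ Hs.H y ∧ φ ∈ Hs.H y := by
  subst h0 hm
  have hy := Hs.isH.ck_mem_of_path hx hstep
  exact ⟨hy, (Hs.isH.fullyExpanded _).mem_of_ck_mem_s8 hy⟩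

/-- If `C_A φ ∈ H(r,n)` and `(r',n')` is connected to `(r,n)` by a finite
undirected path whose steps use relations `R^D_{B_i}` with `a_i ∈ B_i` for some
`a_i ∈ A`, then `C_A φ` and `φ` belong to `H(r',n')`. -/
theorem statement_8 {Agt AP : Type} [Fintype Agt] [Nonempty Agt]
    (Hs : TEHS Agt AP) (A : Coalition Agt) (φ : Formula Agt AP)
    (x y : Hs.G.Point) (hx : Formula.ck A φ ∈ Hs.H x)
    (m : ℕ) (pts : ℕ → Hs.G.Point) (h0 : pts 0 = x) (hm : pts m = y)
    (hstep : ∀ i < m, ∃ a ∈ A.1, ∃ B : Coalition Agt, a ∈ B.1 ∧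
        (Hs.G.RD B (pts i) (pts (i + 1)) ∨ Hs.G.RD B (pts (i + 1)) (pts i))) :
    Formula.ck A φ ∈ Hs.H y ∧ φ ∈ Hs.H y :=
  statement_8_general Hs A φ x y hx m pts h0 hm hstep

end CMATEL
end

section
/- Let M be a TEM, let (r,n) be a point of M, and let Γ be a finite set of formulas all of whose members are true at (r,n) in M. Then there exists a minimal fully expanded extension Δ of Γ such that Δ is not patently inconsistent and every formula of Δ is true at (r,n) in M. -/
/-!
The set of formulas true at `x` is fully expanded (by reflexivity of the `R^D_A`, their
antitonicity in `A`, and the fixpoint unfolding of `U`), and no subset of it is patently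
inconsistent. Fully expanded sets are closed under intersections of chains: every disjunctive or
existential closure condition offers finitely many alternatives (finiteness of the set of agents
is what makes this work for `¬C_A`), and along a chain one alternative survives in every member.
Zorn's lemma then gives a minimal fully expanded extension of `Γ` inside the true set.
-/

namespace CMATEL

variable {Agt AP : Type}

section Chain

variable {α : Type*} {c : Set (Set α)}

theorem _root_.IsChain.exists_mem_sInter {ι : Type*} (hc : IsChain (· ⊆ ·) c) {s : Set ι}
    (hs : s.Finite) (hne : s.Nonempty) {f : ι → α} (h : ∀ Δ ∈ c, ∃ i ∈ s, f i ∈ Δ) :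
    ∃ i ∈ s, f i ∈ ⋂₀ c := by
  by_contra! hcon
  simp only [Set.mem_sInter, not_forall, exists_prop] at hcon
  choose! g hgc hgf using hcon
  obtain ⟨i₀, hi₀, hmin⟩ := hs.exists_minimalFor g s hne
  have hle : ∀ j ∈ s, g i₀ ⊆ g j := fun j hj =>
    (hc.total (hgc i₀ hi₀) (hgc j hj)).elim id (hmin hj)
  obtain ⟨j, hj, hfj⟩ := h _ (hgc i₀ hi₀)
  exact hgf j hj (hle j hj hfj)

theorem _root_.IsChain.mem_sInter_or (hc : IsChain (· ⊆ ·) c) {a b : α}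
    (h : ∀ Δ ∈ c, a ∈ Δ ∨ b ∈ Δ) : a ∈ ⋂₀ c ∨ b ∈ ⋂₀ c := by
  obtain ⟨i, hi, hmem⟩ := hc.exists_mem_sInter (Set.toFinite {a, b}) (Set.insert_nonempty a {b})
    (f := id) fun Δ hΔ => (h Δ hΔ).elim (⟨a, .inl rfl, ·⟩) (⟨b, .inr rfl, ·⟩)
  rcases hi with rfl | rfl
  exacts [.inl hmem, .inr hmem]

end Chain

theorem fullyExpanded_sInter [Finite Agt] {c : Set (Set (Formula Agt AP))}
    (hc : IsChain (· ⊆ ·) c) (hfe : ∀ Δ ∈ c, FullyExpanded Δ) : FullyExpanded (⋂₀ c) := by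
  choose nn and_ nand nnext untl nuntl dk_mono dk_refl ck nck dk_sub using hfe
  have mem {φ : Formula Agt AP} (h : φ ∈ ⋂₀ c) : ∀ Δ ∈ c, φ ∈ Δ := Set.mem_sInter.mp h
  refine ⟨fun φ h => Set.mem_sInter.mpr fun Δ hΔ => nn Δ hΔ φ (mem h Δ hΔ),
    fun φ ψ h => ⟨Set.mem_sInter.mpr fun Δ hΔ => (and_ Δ hΔ φ ψ (mem h Δ hΔ)).1,
      Set.mem_sInter.mpr fun Δ hΔ => (and_ Δ hΔ φ ψ (mem h Δ hΔ)).2⟩,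
    fun φ ψ h => hc.mem_sInter_or fun Δ hΔ => nand Δ hΔ φ ψ (mem h Δ hΔ),
    fun φ h => Set.mem_sInter.mpr fun Δ hΔ => nnext Δ hΔ φ (mem h Δ hΔ),
    fun φ ψ h => ?_, fun φ ψ h => ?_,
    fun A A' φ h hA => Set.mem_sInter.mpr fun Δ hΔ => dk_mono Δ hΔ A A' φ (mem h Δ hΔ) hA,
    fun A φ h => Set.mem_sInter.mpr fun Δ hΔ => dk_refl Δ hΔ A φ (mem h Δ hΔ),
    fun A φ h a ha => Set.mem_sInter.mpr fun Δ hΔ => ck Δ hΔ A φ (mem h Δ hΔ) a ha,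
    fun A φ h => hc.exists_mem_sInter A.1.toFinite A.2 fun Δ hΔ => nck Δ hΔ A φ (mem h Δ hΔ),
    fun ψ h A φ hsub => hc.mem_sInter_or fun Δ hΔ => dk_sub Δ hΔ ψ (mem h Δ hΔ) A φ hsub⟩
  · have hψφ := hc.mem_sInter_or fun Δ hΔ => (untl Δ hΔ φ ψ (mem h Δ hΔ)).imp_right And.left
    have hψX := hc.mem_sInter_or fun Δ hΔ => (untl Δ hΔ φ ψ (mem h Δ hΔ)).imp_right And.right
    tauto
  · have hnψ := Set.mem_sInter.mpr fun Δ hΔ =>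
      (nuntl Δ hΔ φ ψ (mem h Δ hΔ)).elim And.left And.left
    exact (hc.mem_sInter_or fun Δ hΔ =>
      (nuntl Δ hΔ φ ψ (mem h Δ hΔ)).imp And.right And.right).imp (⟨hnψ, ·⟩) (⟨hnψ, ·⟩)

theorem exists_minimalFEE_subset [Finite Agt] {Γ T : Set (Formula Agt AP)}
    (hT : FullyExpanded T) (hΓ : Γ ⊆ T) : ∃ Δ, MinimalFEE Γ Δ ∧ Δ ⊆ T := by
  let S : Set (Set (Formula Agt AP)) := {Δ | FullyExpanded Δ ∧ Γ ⊆ Δ ∧ Δ ⊆ T}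
  have hchain : ∀ c ⊆ S, IsChain (· ⊆ ·) c → c.Nonempty → ∃ lb ∈ S, ∀ Δ ∈ c, lb ⊆ Δ :=
    fun c hcS hc ⟨Δ₀, hΔ₀⟩ =>
      ⟨⋂₀ c, ⟨fullyExpanded_sInter hc fun Δ hΔ => (hcS hΔ).1,
        Set.subset_sInter fun Δ hΔ => (hcS hΔ).2.1,
        (Set.sInter_subset_of_mem hΔ₀).trans (hcS hΔ₀).2.2⟩,
        fun _ => Set.sInter_subset_of_mem⟩
  obtain ⟨Δ, -, ⟨hfe, hΓΔ, hΔT⟩, hmin⟩ := zorn_superset_nonempty S hchain T ⟨hT, hΓ, subset_rfl⟩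
  refine ⟨Δ, ⟨hfe, hΓΔ, fun ⟨Δ', hfe', hΓΔ', hlt⟩ => ?_⟩, hΔT⟩
  exact hlt.not_subset (hmin ⟨hfe', hΓΔ', hlt.subset.trans hΔT⟩ hlt.subset)

theorem sat_untl_iff {R : Type} (RD RC : Coalition Agt → R × ℕ → R × ℕ → Prop)
    (lab : R × ℕ → Set AP) (x : R × ℕ) (φ ψ : Formula Agt AP) :
    Sat RD RC lab x (.untl φ ψ) ↔
      Sat RD RC lab x ψ ∨ (Sat RD RC lab x φ ∧ Sat RD RC lab x (.next (.untl φ ψ))) := by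
  obtain ⟨r, n⟩ := x
  simp only [Sat]
  constructor
  · rintro ⟨i, hni, hψ, hφ⟩
    rcases hni.eq_or_lt with rfl | hlt
    · exact .inl hψ
    · exact .inr ⟨hφ n le_rfl hlt, i, hlt, hψ, fun j hj hji => hφ j (by omega) hji⟩
  · rintro (hψ | ⟨hφ, i, hni, hψ, hφ'⟩)
    · exact ⟨n, le_rfl, hψ, fun j hj hjn => absurd hj (by omega)⟩
    · refine ⟨i, by omega, hψ, fun j hj hji => ?_⟩
      rcases hj.eq_or_lt with rfl | hlt
      exacts [hφ, hφ' j hlt hji]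

theorem TES.rc_trans (G : TES Agt) {A : Coalition Agt} {x y z : G.Point}
    (hxy : G.RC A x y) (hyz : G.RC A y z) : G.RC A x z := by
  rw [G.hRC] at *
  exact hxy.trans hyz

theorem TES.rc_of_rd_single (G : TES Agt) {A : Coalition Agt} {a : Agt} (ha : a ∈ A.1)
    {x y : G.Point} (h : G.RD (single a) x y) : G.RC A x y := by
  rw [G.hRC]
  exact .single ⟨single a, Set.singleton_subset_iff.mpr ha, h⟩

theorem fullyExpanded_setOf_sat (G : TES Agt) (lab : G.Point → Set AP) (x : G.Point)
    (hrefl : ∀ A, G.RD A x x)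
    (hanti : ∀ A A' : Coalition Agt, A.1 ⊆ A'.1 → ∀ y, G.RD A' x y → G.RD A x y) :
    FullyExpanded {φ : Formula Agt AP | Sat G.RD G.RC lab x φ} := by
  refine ⟨fun φ h => not_not.mp h, fun φ ψ h => h, fun φ ψ h => not_and_or.mp h, fun φ h => h,
    fun φ ψ h => (sat_untl_iff _ _ _ x φ ψ).mp h, fun φ ψ h => ?_,
    fun A A' φ h hA y hy => h y (hanti A A' hA y hy), fun A φ h => h x (hrefl A),
    fun A φ h a ha y hy => ⟨h y (G.rc_of_rd_single ha hy),
      fun z hz => h z (G.rc_trans (G.rc_of_rd_single ha hy) hz)⟩,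
    fun A φ h => ?_, fun ψ _ A φ _ => em _⟩
  · have := (sat_untl_iff G.RD G.RC lab x φ ψ).not.mp h
    tauto
  · by_contra! hall
    obtain ⟨a, ha⟩ := A.2
    exact h (not_not.mp (hall a ha) x (hrefl _)).2

theorem IsTEF.rd_anti {G : TES Agt} (hG : IsTEF G) {A A' : Coalition Agt} (hA : A.1 ⊆ A'.1)
    {x y : G.Point} (h : G.RD A' x y) : G.RD A x y :=
  (hG.2 A x y).mpr fun a ha => (hG.2 A' x y).mp h a (hA ha)

theorem statement_15_general {Agt AP : Type} [Fintype Agt]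
    (M : TEM Agt AP) (x : M.G.Point) (Γ : Set (Formula Agt AP))
    (hΓ : ∀ φ ∈ Γ, M.sat x φ) :
    ∃ Δ : Set (Formula Agt AP), MinimalFEE Γ Δ ∧ ¬ PatentlyInconsistent Δ ∧
      ∀ φ ∈ Δ, M.sat x φ := by
  have hfe : FullyExpanded {φ | M.sat x φ} :=
    fullyExpanded_setOf_sat M.G M.lab x (fun A => (M.isTEF.1 A).refl x)
      fun _ _ hA _ => M.isTEF.rd_anti hA
  obtain ⟨Δ, hmin, hΔ⟩ := exists_minimalFEE_subset hfe hΓ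
  exact ⟨Δ, hmin, fun ⟨_, hφ, hnφ⟩ => hΔ hnφ (hΔ hφ), hΔ⟩

/-- Any finite set `Γ` of formulas all true at a point of a TEM has a
minimal fully expanded extension `Δ` that is not patently inconsistent, all of whose
members are true at that point. -/
theorem statement_15 {Agt AP : Type} [Fintype Agt] [Nonempty Agt]
    (M : TEM Agt AP) (x : M.G.Point) (Γ : Set (Formula Agt AP))
    (hfin : Γ.Finite) (hΓ : ∀ φ ∈ Γ, M.sat x φ) :
    ∃ Δ : Set (Formula Agt AP), MinimalFEE Γ Δ ∧ ¬ PatentlyInconsistent Δ ∧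
      ∀ φ ∈ Δ, M.sat x φ :=
  statement_15_general M x Γ hΓ

end CMATEL
end
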